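/- Let σx = !![0, 1; 1, 0], σy = !![0, −i; i, 0], σz = !![1, 0; 0, −1] be the Pauli matrices, I₂ the 2 × 2 identity, m ≥ 1, I_m the m × m identity, and D any m × m complex matrix. Define H₄ = (I₂ ⊗ σy ⊗ I₂) ⊗ I_m, H₅ = (I₂ ⊗ I₂ ⊗ σx) ⊗ I_m, H₆ = (I₂ ⊗ I₂ ⊗ σy) ⊗ I_m, H₈ = (I₂ ⊗ σz ⊗ σz) ⊗ I_m, H₉ = (I₂ ⊗ I₂ ⊗ σz) ⊗ D. Then ⁅⁅H₄, H₈⁆, ⁅⁅H₈, H₅⁆, ⁅H₆, H₉⁆⁆⁆ = (32 i) • ((I₂ ⊗ σy ⊗ I₂) ⊗ D). In particular, the resulting operator acts as σy on qubit 2, trivially (as the identity) on the ancillary qubit, and as D on the environment. -/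

import Mathlib

open Kronecker

/-!
All operators involved are Pauli strings. If two Kronecker products have commuting factors in
every slot but one, their commutator is the Kronecker product of the factorwise products, with
the Pauli commutator `±2i σ` in the exceptional slot. So each of the five brackets contributes
a factor `±2i`: `⁅H₄, H₈⁆ = 2i σx⁽²⁾σz⁽ᵇ⁾`, `⁅⁅H₈, H₅⁆, ⁅H₆, H₉⁆⁆ = (2i)²(-2i) σz⁽²⁾σz⁽ᵇ⁾ D`, and the
final bracket removes `σz⁽ᵇ⁾` since `σz² = 1`, leaving `(2i)⁵ σy⁽²⁾ D = 32i σy⁽²⁾ D`.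
-/

namespace Matrix

variable {l n p q : Type*}

theorem sub_kronecker {α : Type*} [NonUnitalNonAssocRing α] (A B : Matrix l n α)
    (C : Matrix p q α) : (A - B) ⊗ₖ C = A ⊗ₖ C - B ⊗ₖ C := by
  ext
  simp [sub_mul]

theorem kronecker_sub {α : Type*} [NonUnitalNonAssocRing α] (A : Matrix l n α)
    (B C : Matrix p q α) : A ⊗ₖ (B - C) = A ⊗ₖ B - A ⊗ₖ C := by
  ext
  simp [mul_sub]

variable {R : Type*} [CommRing R] [Fintype l] [Fintype p]

theorem lie_kronecker_of_commute_right (A C : Matrix l l R) {B E : Matrix p p R}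
    (h : Commute B E) : ⁅A ⊗ₖ B, C ⊗ₖ E⁆ = ⁅A, C⁆ ⊗ₖ (B * E) := by
  rw [Ring.lie_def, Ring.lie_def, ← mul_kronecker_mul, ← mul_kronecker_mul, h.eq, sub_kronecker]

theorem lie_kronecker_of_commute_left {A C : Matrix l l R} (B E : Matrix p p R)
    (h : Commute A C) : ⁅A ⊗ₖ B, C ⊗ₖ E⁆ = (A * C) ⊗ₖ ⁅B, E⁆ := by
  rw [Ring.lie_def, Ring.lie_def, ← mul_kronecker_mul, ← mul_kronecker_mul, h.eq, kronecker_sub]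

end Matrix

open Matrix

theorem Ring.smul_lie_smul {R A : Type*} [CommRing R] [Ring A] [Algebra R A] (a b : R)
    (x y : A) : ⁅a • x, b • y⁆ = (a * b) • ⁅x, y⁆ := by
  rw [Ring.lie_def, Ring.lie_def, smul_mul_smul_comm, smul_mul_smul_comm, mul_comm b,
    smul_sub]

def pauliX : Matrix (Fin 2) (Fin 2) ℂ := !![0, 1; 1, 0]

def pauliY : Matrix (Fin 2) (Fin 2) ℂ := !![0, -Complex.I; Complex.I, 0]

def pauliZ : Matrix (Fin 2) (Fin 2) ℂ := !![1, 0; 0, -1]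

theorem pauliZ_mul_self : pauliZ * pauliZ = 1 := by
  simp [pauliZ, Matrix.one_fin_two]

theorem lie_pauliY_pauliZ : ⁅pauliY, pauliZ⁆ = (2 * Complex.I) • pauliX := by
  ext i j
  fin_cases i <;> fin_cases j <;>
    norm_num [Ring.lie_def, pauliX, pauliY, pauliZ, Complex.ext_iff]

theorem lie_pauliZ_pauliX : ⁅pauliZ, pauliX⁆ = (2 * Complex.I) • pauliY := by
  ext i j
  fin_cases i <;> fin_cases j <;>
    norm_num [Ring.lie_def, pauliX, pauliY, pauliZ, Complex.ext_iff]

theorem lie_pauliY_pauliX : ⁅pauliY, pauliX⁆ = (-2 * Complex.I) • pauliZ := by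
  ext i j
  fin_cases i <;> fin_cases j <;>
    norm_num [Ring.lie_def, pauliX, pauliY, pauliZ, Complex.ext_iff]

theorem lie_pauliX_pauliZ : ⁅pauliX, pauliZ⁆ = (-2 * Complex.I) • pauliY := by
  ext i j
  fin_cases i <;> fin_cases j <;>
    norm_num [Ring.lie_def, pauliX, pauliY, pauliZ, Complex.ext_iff]

theorem ancilla_generates_qubit_environment_coupling_general (m : ℕ)
    (D : Matrix (Fin m) (Fin m) ℂ) :
    let σx : Matrix (Fin 2) (Fin 2) ℂ := !![0, 1; 1, 0]
    let σy : Matrix (Fin 2) (Fin 2) ℂ := !![0, -Complex.I; Complex.I, 0]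
    let σz : Matrix (Fin 2) (Fin 2) ℂ := !![1, 0; 0, -1]
    let I2 : Matrix (Fin 2) (Fin 2) ℂ := 1
    let Im : Matrix (Fin m) (Fin m) ℂ := 1
    let H4 := (I2 ⊗ₖ σy ⊗ₖ I2) ⊗ₖ Im
    let H5 := (I2 ⊗ₖ I2 ⊗ₖ σx) ⊗ₖ Im
    let H6 := (I2 ⊗ₖ I2 ⊗ₖ σy) ⊗ₖ Im
    let H8 := (I2 ⊗ₖ σz ⊗ₖ σz) ⊗ₖ Im
    let H9 := (I2 ⊗ₖ I2 ⊗ₖ σz) ⊗ₖ D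
    ⁅⁅H4, H8⁆, ⁅⁅H8, H5⁆, ⁅H6, H9⁆⁆⁆ =
      ((32 : ℂ) * Complex.I) • ((I2 ⊗ₖ σy ⊗ₖ I2) ⊗ₖ D) := by
  intro σx σy σz I2 Im H4 H5 H6 H8 H9
  have hyz : ⁅σy, σz⁆ = (2 * Complex.I) • σx := lie_pauliY_pauliZ
  have hzx : ⁅σz, σx⁆ = (2 * Complex.I) • σy := lie_pauliZ_pauliX
  have hyx : ⁅σy, σx⁆ = (-2 * Complex.I) • σz := lie_pauliY_pauliX
  have hxz : ⁅σx, σz⁆ = (-2 * Complex.I) • σy := lie_pauliX_pauliZ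
  have hzz : σz * σz = 1 := pauliZ_mul_self
  have h48 : ⁅H4, H8⁆ = (2 * Complex.I) • ((I2 ⊗ₖ σx ⊗ₖ σz) ⊗ₖ Im) := by
    simp only [H4, H8, I2, Im, lie_kronecker_of_commute_right, lie_kronecker_of_commute_left,
      Commute.one_left, Commute.refl, one_mul, mul_one, smul_kronecker, kronecker_smul, hyz]
  have h85 : ⁅H8, H5⁆ = (2 * Complex.I) • ((I2 ⊗ₖ σz ⊗ₖ σy) ⊗ₖ Im) := by
    simp only [H5, H8, I2, Im, lie_kronecker_of_commute_right, lie_kronecker_of_commute_left,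
      Commute.one_right, Commute.refl, one_kronecker_one, mul_one, smul_kronecker, kronecker_smul,
      hzx]
  have h69 : ⁅H6, H9⁆ = (2 * Complex.I) • ((I2 ⊗ₖ I2 ⊗ₖ σx) ⊗ₖ D) := by
    simp only [H6, H9, I2, Im, lie_kronecker_of_commute_right, lie_kronecker_of_commute_left,
      Commute.one_left, Commute.refl, one_kronecker_one, one_mul, mul_one, smul_kronecker,
      kronecker_smul, hyz]
  have h_ancilla : ⁅(I2 ⊗ₖ σz ⊗ₖ σy) ⊗ₖ Im, (I2 ⊗ₖ I2 ⊗ₖ σx) ⊗ₖ D⁆ =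
      (-2 * Complex.I) • ((I2 ⊗ₖ σz ⊗ₖ σz) ⊗ₖ D) := by
    simp only [I2, Im, lie_kronecker_of_commute_right, lie_kronecker_of_commute_left,
      Commute.one_left, Commute.one_right, one_kronecker_one, one_mul, mul_one, smul_kronecker,
      kronecker_smul, hyx]
  have h_qubit : ⁅(I2 ⊗ₖ σx ⊗ₖ σz) ⊗ₖ Im, (I2 ⊗ₖ σz ⊗ₖ σz) ⊗ₖ D⁆ =
      (-2 * Complex.I) • ((I2 ⊗ₖ σy ⊗ₖ I2) ⊗ₖ D) := by
    simp only [I2, Im, lie_kronecker_of_commute_right, lie_kronecker_of_commute_left,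
      Commute.one_left, Commute.refl, one_mul, mul_one, smul_kronecker, kronecker_smul, hxz, hzz]
  simp only [h48, h85, h69, Ring.smul_lie_smul, h_ancilla, h_qubit, smul_smul]
  congr 1
  linear_combination (32 * Complex.I * (Complex.I ^ 2 - 1)) * Complex.I_sq

/-- The ancillary quantum controller generates an effective coupling between `σy^{(2)}` and
the environment acting trivially on the ancilla: the nested commutator
`⁅⁅H₄, H₈⁆, ⁅⁅H₈, H₅⁆, ⁅H₆, H₉⁆⁆⁆` equals `(32i) • ((I₂ ⊗ σy ⊗ I₂) ⊗ D)`. -/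
theorem ancilla_generates_qubit_environment_coupling (m : ℕ) (hm : 1 ≤ m)
    (D : Matrix (Fin m) (Fin m) ℂ) :
    let σx : Matrix (Fin 2) (Fin 2) ℂ := !![0, 1; 1, 0]
    let σy : Matrix (Fin 2) (Fin 2) ℂ := !![0, -Complex.I; Complex.I, 0]
    let σz : Matrix (Fin 2) (Fin 2) ℂ := !![1, 0; 0, -1]
    let I2 : Matrix (Fin 2) (Fin 2) ℂ := 1
    let Im : Matrix (Fin m) (Fin m) ℂ := 1
    let H4 := (I2 ⊗ₖ σy ⊗ₖ I2) ⊗ₖ Im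
    let H5 := (I2 ⊗ₖ I2 ⊗ₖ σx) ⊗ₖ Im
    let H6 := (I2 ⊗ₖ I2 ⊗ₖ σy) ⊗ₖ Im
    let H8 := (I2 ⊗ₖ σz ⊗ₖ σz) ⊗ₖ Im
    let H9 := (I2 ⊗ₖ I2 ⊗ₖ σz) ⊗ₖ D
    ⁅⁅H4, H8⁆, ⁅⁅H8, H5⁆, ⁅H6, H9⁆⁆⁆ =
      ((32 : ℂ) * Complex.I) • ((I2 ⊗ₖ σy ⊗ₖ I2) ⊗ₖ D) :=
  ancilla_generates_qubit_environment_coupling_general m D
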